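/- (Main theorem, necessity.) Let {H, B; L₀, Γ₁, Γ₂} be a Green system satisfying conditions A, B, C, and suppose L₀ has a part L₀|_G in a nonzero closed subspace G ⊂ H with n₊[L₀|_G] = 0. Then G is orthogonal to the total reachable set U of the boundary control system i u_t + L₀* u = 0, u(0) = 0, Γ₁ u = f; in particular the system is not controllable. -/

import Mathlib

open scoped LinearPMap


open Set

lemma upper_half_reach {S : Set ℂ} (hi : Complex.I ∈ S)
    (hball : ∀ z₀ ∈ S, 0 < z₀.im → ∀ z : ℂ, dist z z₀ < z₀.im → z ∈ S) :
    ∀ z : ℂ, 0 < z.im → z ∈ S := by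
  have hdim : ∀ z₀ z : ℂ, dist z z₀ < z₀.im → 0 < z.im := by
    intro z₀ z hd
    have h1 : |z.im - z₀.im| ≤ dist z z₀ := by
      rw [Complex.dist_eq]
      simpa using Complex.abs_im_le_norm (z - z₀)
    have := abs_le.1 h1
    linarith [this.1]
  set U : Set ℂ := {z : ℂ | 0 < z.im} with hU
  set W₁ : Set ℂ := ⋃ z₀ ∈ S ∩ U, Metric.ball z₀ z₀.im with hW₁
  set W₂ : Set ℂ := ⋃ z₀ ∈ U \ S, Metric.ball z₀ (z₀.im / 2) with hW₂
  have hW₁o : IsOpen W₁ := isOpen_biUnion fun _ _ => Metric.isOpen_ball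
  have hW₂o : IsOpen W₂ := isOpen_biUnion fun _ _ => Metric.isOpen_ball
  have hW₁S : W₁ ⊆ S ∩ U := by
    intro z hz
    simp only [hW₁, mem_iUnion, Metric.mem_ball, exists_prop] at hz
    obtain ⟨z₀, ⟨hz₀S, hz₀U⟩, hb⟩ := hz
    exact ⟨hball z₀ hz₀S hz₀U z hb, hdim z₀ z hb⟩
  have hdisj : Disjoint W₁ W₂ := by
    rw [Set.disjoint_left]
    intro z hz1 hz2
    obtain ⟨hzS, hzU⟩ := hW₁S hz1
    simp only [hW₂, mem_iUnion, Metric.mem_ball, exists_prop] at hz2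
    obtain ⟨z₀, ⟨hz₀U, hz₀S⟩, hb⟩ := hz2
    apply hz₀S
    have h1 : |z.im - z₀.im| ≤ dist z z₀ := by
      rw [Complex.dist_eq]; simpa using Complex.abs_im_le_norm (z - z₀)
    have h2 : dist z₀ z < z.im := by
      rw [dist_comm]
      have := (abs_le.1 h1).1
      have hz₀im : 0 < z₀.im := hz₀U
      linarith
    exact hball z hzS hzU z₀ h2
  have hcover : U ⊆ W₁ ∪ W₂ := by
    intro z hzU
    by_cases hzS : z ∈ S
    · left
      simp only [hW₁, mem_iUnion, Metric.mem_ball, exists_prop]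
      exact ⟨z, ⟨hzS, hzU⟩, by simpa using (show 0 < z.im from hzU)⟩
    · right
      simp only [hW₂, mem_iUnion, Metric.mem_ball, exists_prop]
      have hz' : (0:ℝ) < z.im := hzU
      refine ⟨z, ⟨hzU, hzS⟩, ?_⟩
      simp only [dist_self]
      linarith
  have hIU : Complex.I ∈ U := by simp [hU, Complex.I_im]
  have hne : (U ∩ W₁).Nonempty := by
    refine ⟨Complex.I, hIU, ?_⟩
    simp only [hW₁, mem_iUnion, Metric.mem_ball, exists_prop]
    exact ⟨Complex.I, ⟨hi, hIU⟩, by simp [Complex.I_im]⟩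
  have hpre : IsPreconnected U := (convex_halfSpace_im_gt 0).isPreconnected
  have hsub : U ⊆ W₁ := hpre.subset_left_of_subset_union hW₁o hW₂o hdisj hcover hne
  intro z hz
  exact (hW₁S (hsub hz)).1


open Set MeasureTheory intervalIntegral

/-- If a continuous function `v` on `[0,T]` has Laplace-type transforms
`∫_0^t e^{-cs} v(s) ds` decaying like `C e^{-t Re c}/Re c` on the right half plane
(for every `t`), then `v ≡ 0` on `[0,T]`. -/
lemma laplace_decay_zero {T : ℝ} (hT : 0 < T) {v : ℝ → ℂ} (hv : ContinuousOn v (Icc 0 T))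
    {C : ℝ}
    (hb : ∀ t ∈ Ioc (0:ℝ) T, ∀ c : ℂ, 0 < c.re →
      ‖∫ s in (0:ℝ)..t, Complex.exp (-(c * s)) * v s‖ ≤ C * Real.exp (-(c.re * t)) / c.re) :
    ∀ t ∈ Icc (0:ℝ) T, v t = 0 := by
  -- bound on v
  obtain ⟨M, hM⟩ : ∃ M, ∀ s ∈ Icc (0:ℝ) T, ‖v s‖ ≤ M :=
    IsCompact.exists_bound_of_continuousOn isCompact_Icc hv
  have hM0 : 0 ≤ M := le_trans (norm_nonneg _) (hM 0 ⟨le_rfl, hT.le⟩)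
  -- Step 1: all transforms vanish
  have step1 : ∀ t ∈ Ioc (0:ℝ) T, ∀ c : ℂ,
      (∫ s in (0:ℝ)..t, Complex.exp (-(c * s)) * v s) = 0 := by
    rintro t ⟨ht0, htT⟩ c
    have hIcc : Icc (0:ℝ) t ⊆ Icc 0 T := Icc_subset_Icc le_rfl htT
    have hIoc : Set.uIoc (0:ℝ) t ⊆ Icc 0 T := by
      rw [uIoc_of_le ht0.le]; exact fun s hs => hIcc ⟨hs.1.le, hs.2⟩
    set h : ℂ → ℂ := fun c => ∫ s in (0:ℝ)..t, Complex.exp (c * (t - s)) * v s with hh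
    -- continuity of integrand in s
    have hcont : ∀ c : ℂ, ContinuousOn (fun s : ℝ => Complex.exp (c * ((t:ℂ) - s)) * v s)
        (Icc 0 T) := by
      intro c
      apply ContinuousOn.mul _ hv
      apply Continuous.continuousOn
      exact Complex.continuous_exp.comp (by fun_prop)
    have hint : ∀ c : ℂ, IntervalIntegrable
        (fun s : ℝ => Complex.exp (c * ((t:ℂ) - s)) * v s) volume 0 t :=
      fun c => ((hcont c).mono (by rwa [uIcc_of_le ht0.le])).intervalIntegrable
    -- h is differentiable
    have hdiff : Differentiable ℂ h := by
      intro c₀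
      have key := intervalIntegral.hasDerivAt_integral_of_dominated_loc_of_deriv_le
        (F := fun c s => Complex.exp (c * ((t:ℂ) - s)) * v s)
        (F' := fun c s => ((t:ℂ) - s) * Complex.exp (c * ((t:ℂ) - s)) * v s)
        (x₀ := c₀) (a := 0) (b := t) (μ := volume)
        (bound := fun _ => t * Real.exp ((‖c₀‖ + 1) * t) * M)
        (Metric.ball_mem_nhds c₀ one_pos) ?_ (hint c₀) ?_ ?_ ?_ ?_
      · exact key.2.differentiableAt
      · filter_upwards with c
        exact (((hcont c).mono hIoc).aestronglyMeasurable measurableSet_uIoc)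
      · apply ContinuousOn.aestronglyMeasurable _ measurableSet_uIoc
        apply ContinuousOn.mono _ hIoc
        apply ContinuousOn.mul _ hv
        apply Continuous.continuousOn; fun_prop
      · filter_upwards with s hs c hc
        have hs' : s ∈ Ioc 0 t := by rwa [uIoc_of_le ht0.le] at hs
        have h1 : ‖(t:ℂ) - s‖ ≤ t := by
          rw [← Complex.ofReal_sub, Complex.norm_real]
          rw [Real.norm_eq_abs, abs_of_nonneg (by linarith [hs'.2])]
          linarith [hs'.1.le]
        have h2 : ‖Complex.exp (c * ((t:ℂ) - s))‖ ≤ Real.exp ((‖c₀‖ + 1) * t) := by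
          rw [Complex.norm_exp]
          apply Real.exp_le_exp.2
          calc (c * ((t:ℂ) - s)).re ≤ ‖c * ((t:ℂ) - s)‖ := Complex.re_le_norm _
            _ ≤ ‖c‖ * t := by
                rw [norm_mul]
                exact mul_le_mul_of_nonneg_left h1 (norm_nonneg _)
            _ ≤ (‖c₀‖ + 1) * t := by
                apply mul_le_mul_of_nonneg_right _ (by linarith [hs'.2, hs'.1])
                have := mem_ball_iff_norm.1 hc
                calc ‖c‖ ≤ ‖c₀‖ + ‖c - c₀‖ := by
                      simpa using norm_add_le (c₀) (c - c₀)
                  _ ≤ ‖c₀‖ + 1 := by linarith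
        calc ‖((t:ℂ) - s) * Complex.exp (c * ((t:ℂ) - s)) * v s‖
            = ‖(t:ℂ) - s‖ * ‖Complex.exp (c * ((t:ℂ) - s))‖ * ‖v s‖ := by
              rw [norm_mul, norm_mul]
          _ ≤ t * Real.exp ((‖c₀‖ + 1) * t) * M := by
              apply mul_le_mul (mul_le_mul h1 h2 (norm_nonneg _) (by linarith [hs'.2, hs'.1]))
                (hM s (hIcc ⟨hs'.1.le, hs'.2⟩)) (norm_nonneg _)
              positivity
      · exact intervalIntegrable_const
      · filter_upwards with s hs c _
        have : HasDerivAt (fun c : ℂ => c * ((t:ℂ) - s)) ((t:ℂ) - s) c := by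
          simpa using (hasDerivAt_id c).mul_const ((t:ℂ) - s)
        have := (this.cexp).mul_const (v s)
        exact this.congr_deriv (by ring)
    -- relation to the Laplace transform
    have hrel : ∀ c : ℂ, h c = Complex.exp (c * t) * ∫ s in (0:ℝ)..t,
        Complex.exp (-(c * s)) * v s := by
      intro c
      rw [hh]
      simp only
      rw [← intervalIntegral.integral_const_mul]
      apply intervalIntegral.integral_congr
      intro s _
      simp only
      rw [← mul_assoc, ← Complex.exp_add]
      ring_nf
    -- C is nonnegative
    have hC0 : 0 ≤ C := by
      have := hb t ⟨ht0, htT⟩ 1 (by norm_num)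
      have h0 := le_trans (norm_nonneg _) this
      simp only [Complex.one_re] at h0
      nlinarith [Real.exp_pos (-(1 * t))]
    -- bound on h in the right half plane
    have hright : ∀ c : ℂ, 0 < c.re → ‖h c‖ ≤ C / c.re := by
      intro c hc
      rw [hrel c, norm_mul]
      have h1 : ‖Complex.exp (c * t)‖ = Real.exp (c.re * t) := by
        rw [Complex.norm_exp]
        congr 1
        simp [Complex.mul_re]
      rw [h1]
      calc Real.exp (c.re * t) * ‖∫ s in (0:ℝ)..t, Complex.exp (-(c * s)) * v s‖
          ≤ Real.exp (c.re * t) * (C * Real.exp (-(c.re * t)) / c.re) := by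
            exact mul_le_mul_of_nonneg_left (hb t ⟨ht0, htT⟩ c hc) (Real.exp_pos _).le
        _ = C / c.re := by
            rw [Real.exp_neg]
            field_simp
    -- bound on h in the left part
    have hleft : ∀ c : ℂ, c.re ≤ 1 → ‖h c‖ ≤ Real.exp T * M * T := by
      intro c hc
      have : ‖h c‖ ≤ Real.exp T * M * |t - 0| := by
        apply intervalIntegral.norm_integral_le_of_norm_le_const
        intro s hs
        have hs' : s ∈ Ioc 0 t := by rwa [uIoc_of_le ht0.le] at hs
        have hexp : ‖Complex.exp (c * ((t:ℂ) - s))‖ ≤ Real.exp T := by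
          rw [Complex.norm_exp]
          apply Real.exp_le_exp.2
          have h2 : (c * ((t:ℂ) - s)).re = c.re * (t - s) := by
            rw [← Complex.ofReal_sub]
            simp [Complex.mul_re]
          rw [h2]
          nlinarith [hs'.1.le, hs'.2]
        rw [norm_mul]
        exact mul_le_mul hexp (hM s (hIcc ⟨hs'.1.le, hs'.2⟩)) (norm_nonneg _)
          (Real.exp_pos _).le
      rw [abs_of_nonneg (by linarith)] at this
      calc ‖h c‖ ≤ Real.exp T * M * t := by simpa using this
        _ ≤ Real.exp T * M * T := by
            apply mul_le_mul_of_nonneg_left htT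
            positivity
    -- h is bounded, hence constant by Liouville, hence 0
    have hbdd : Bornology.IsBounded (Set.range h) := by
      rw [isBounded_iff_forall_norm_le]
      refine ⟨max (Real.exp T * M * T) C, ?_⟩
      rintro _ ⟨c, rfl⟩
      rcases le_or_gt c.re 1 with hc | hc
      · exact le_max_of_le_left (hleft c hc)
      · refine le_max_of_le_right ?_
        calc ‖h c‖ ≤ C / c.re := hright c (by linarith)
          _ ≤ C := by
              rw [div_le_iff₀ (by linarith)]
              nlinarith
    have hzero : ∀ c : ℂ, h c = 0 := by
      intro c
      have heq : ∀ n : ℕ, h c = h (n + 1 : ℕ) := fun n =>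
        hdiff.apply_eq_apply_of_bounded hbdd c _
      have hnorm : ∀ n : ℕ, ‖h c‖ ≤ C / (n + 1 : ℝ) := by
        intro n
        rw [heq n]
        have : ((((n:ℕ) + 1 : ℕ) : ℂ)).re = (n + 1 : ℝ) := by push_cast; simp
        have h2 := hright ((n + 1 : ℕ) : ℂ) (by rw [this]; positivity)
        rwa [this] at h2
      have hlim : Filter.Tendsto (fun n : ℕ => C / (n + 1 : ℝ)) Filter.atTop (nhds 0) := by
        have h2 := (tendsto_const_div_atTop_nhds_zero_nat C).comp
          (Filter.tendsto_add_atTop_nat 1)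
        convert h2 using 1
        funext n
        simp [Function.comp]
      have : ‖h c‖ ≤ 0 := ge_of_tendsto hlim (Filter.Eventually.of_forall hnorm)
      exact norm_le_zero_iff.1 this
    -- conclude
    have := hzero c
    rw [hrel c] at this
    exact (mul_eq_zero.1 this).resolve_left (Complex.exp_ne_zero _)
  -- Step 2: FTC gives v = 0 on the interior
  have step2 : ∀ t ∈ Ioo (0:ℝ) T, v t = 0 := by
    intro t₀ ht₀
    set f : ℝ → ℂ := fun s => Complex.exp (-((1:ℂ) * s)) * v s with hf
    have hfc : ContinuousOn f (Icc 0 T) := by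
      apply ContinuousOn.mul _ hv
      apply Continuous.continuousOn; fun_prop
    have hfc' : ContinuousOn f (Ioo 0 T) := hfc.mono Ioo_subset_Icc_self
    have hint : IntervalIntegrable f volume 0 t₀ :=
      (hfc.mono (by rw [uIcc_of_le ht₀.1.le]; exact Icc_subset_Icc le_rfl ht₀.2.le)).intervalIntegrable
    have hmeas : StronglyMeasurableAtFilter f (nhds t₀) volume :=
      hfc'.stronglyMeasurableAtFilter isOpen_Ioo t₀ ht₀
    have hca : ContinuousAt f t₀ := by
      have := hfc.continuousAt (Icc_mem_nhds ht₀.1 ht₀.2)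
      exact this
    have hder : HasDerivAt (fun r => ∫ s in (0:ℝ)..r, f s) (f t₀) t₀ :=
      intervalIntegral.integral_hasDerivAt_right hint hmeas hca
    have hev : (fun r => ∫ s in (0:ℝ)..r, f s) =ᶠ[nhds t₀] fun _ => (0:ℂ) := by
      filter_upwards [Ioo_mem_nhds ht₀.1 ht₀.2] with r hr
      exact step1 r ⟨hr.1, hr.2.le⟩ 1
    have hder0 : HasDerivAt (fun _ : ℝ => (0:ℂ)) (f t₀) t₀ := hder.congr_of_eventuallyEq hev.symm
    have : f t₀ = 0 := by
      have h2 : HasDerivAt (fun _ : ℝ => (0:ℂ)) 0 t₀ := hasDerivAt_const t₀ 0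
      exact hder0.unique h2
    rw [hf] at this
    simp only [mul_eq_zero] at this
    exact this.resolve_left (Complex.exp_ne_zero _)
  -- extend to the closed interval by continuity
  intro t ht
  have hclos : t ∈ closure (Ioo (0:ℝ) T) := by
    rw [closure_Ioo hT.ne]; exact ht
  have hne : (nhdsWithin t (Ioo (0:ℝ) T)).NeBot := mem_closure_iff_nhdsWithin_neBot.1 hclos
  have h1 : Filter.Tendsto v (nhdsWithin t (Ioo (0:ℝ) T)) (nhds (v t)) :=
    ((hv t ht).mono Ioo_subset_Icc_self).tendsto
  have h2 : Filter.Tendsto v (nhdsWithin t (Ioo (0:ℝ) T)) (nhds 0) := by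
    apply Filter.Tendsto.congr' _ tendsto_const_nhds
    filter_upwards [eventually_mem_nhdsWithin] with s hs
    exact (step2 s hs).symm
  exact tendsto_nhds_unique h1 h2


open Set
open scoped LinearPMap

local notation "⟪" x ", " y "⟫" => @inner ℂ _ _ x y

section Resolvent

variable {H : Type*} [NormedAddCommGroup H] [InnerProductSpace ℂ H] [CompleteSpace H]

/-- Lower bound `Im z * ‖x‖ ≤ ‖L₀ x - z x‖` for a symmetric operator. -/
lemma symm_lower_bound (L₀ : H →ₗ.[ℂ] H) (hsymm : L₀.IsFormalAdjoint L₀)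
    (z : ℂ) (x : L₀.domain) : z.im * ‖(x : H)‖ ≤ ‖L₀ x - z • (x : H)‖ := by
  set a := L₀ x with ha
  set b := (x : H) with hb
  have hab : (⟪a, b⟫).im = 0 := by
    have h1 : ⟪a, b⟫ = ⟪b, a⟫ := hsymm x x
    have h4 : (starRingEnd ℂ) ⟪b, a⟫ = ⟪a, b⟫ := inner_conj_symm (𝕜 := ℂ) a b
    have h5 := congrArg Complex.im h4
    simp only [Complex.conj_im] at h5
    have h6 := congrArg Complex.im h1
    linarith
  have hdecomp : a - z • b = (a - (z.re : ℂ) • b) - ((z.im : ℂ) * Complex.I) • b := by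
    have : z = (z.re : ℂ) + (z.im : ℂ) * Complex.I := (Complex.re_add_im z).symm
    rw [sub_sub, ← add_smul, ← this]
  have hXb : (⟪a - (z.re : ℂ) • b, b⟫).im = 0 := by
    rw [inner_sub_left, inner_smul_left]
    have h1 : (⟪b, b⟫ : ℂ).im = 0 := inner_self_im (𝕜 := ℂ) b
    simp only [Complex.sub_im, Complex.mul_im, Complex.conj_ofReal, Complex.ofReal_re,
      Complex.ofReal_im, hab, h1]
    ring
  have hcross : RCLike.re (⟪a - (z.re : ℂ) • b, ((z.im : ℂ) * Complex.I) • b⟫) = 0 := by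
    rw [inner_smul_right]
    have : ((z.im : ℂ) * Complex.I * ⟪a - (z.re : ℂ) • b, b⟫).re = 0 := by
      simp only [Complex.mul_re, Complex.mul_im, Complex.ofReal_re, Complex.ofReal_im,
        Complex.I_re, Complex.I_im, hXb]
      ring
    exact this
  have hsq : ‖a - z • b‖ ^ 2 = ‖a - (z.re : ℂ) • b‖ ^ 2 + ‖((z.im : ℂ) * Complex.I) • b‖ ^ 2 := by
    rw [hdecomp, @norm_sub_sq ℂ _ _ _ _, hcross]
    ring
  have hY : ‖((z.im : ℂ) * Complex.I) • b‖ = |z.im| * ‖b‖ := by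
    rw [norm_smul]
    congr 1
    simp
  have h2 : (|z.im| * ‖b‖) ^ 2 ≤ ‖a - z • b‖ ^ 2 := by
    rw [hsq, ← hY]
    nlinarith [sq_nonneg ‖a - (z.re : ℂ) • b‖]
  have h3 : |z.im| * ‖b‖ ≤ ‖a - z • b‖ := by
    have := Real.sqrt_le_sqrt h2
    rwa [Real.sqrt_sq (by positivity), Real.sqrt_sq (norm_nonneg _)] at this
  calc z.im * ‖b‖ ≤ |z.im| * ‖b‖ :=
        mul_le_mul_of_nonneg_right (le_abs_self _) (norm_nonneg _)
    _ ≤ ‖a - z • b‖ := h3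

lemma resolvent_exists (L₀ : H →ₗ.[ℂ] H) (hclosed : L₀.IsClosed)
    (hsymm : L₀.IsFormalAdjoint L₀)
    (G : Submodule ℂ H) (hGclosed : IsClosed (G : Set H))
    (hGinv : ∀ x (hx : x ∈ L₀.domain), x ∈ G → L₀ ⟨x, hx⟩ ∈ G)
    (hGnplus : (G : Set H) ⊆ closure
      {w : H | ∃ (x : H) (hx : x ∈ L₀.domain), x ∈ G ∧
        w = L₀ ⟨x, hx⟩ - Complex.I • x}) :
    ∀ z : ℂ, 0 < z.im → ∀ y ∈ G, ∃ (x : H) (hx : x ∈ L₀.domain), x ∈ G ∧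
      L₀ ⟨x, hx⟩ - z • x = y ∧ z.im * ‖x‖ ≤ ‖y‖ := by
  -- the "solution sets"
  set Sol : ℂ → Set H := fun z =>
    {w : H | ∃ (x : H) (hx : x ∈ L₀.domain), x ∈ G ∧ L₀ ⟨x, hx⟩ - z • x = w} with hSol
  -- solution sets are closed for Im z > 0
  have hSolclosed : ∀ z : ℂ, 0 < z.im → IsClosed (Sol z) := by
    intro z hz
    apply IsSeqClosed.isClosed
    intro yseq y hyseq hy
    choose X hXdom hXG hXeq using hyseq
    have hXCauchy : CauchySeq X := by
      rw [Metric.cauchySeq_iff]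
      intro ε hε
      obtain ⟨N, hN⟩ := Metric.cauchySeq_iff.1 hy.cauchySeq (z.im * ε) (by positivity)
      refine ⟨N, fun m hm n hn => ?_⟩
      have hsub : X m - X n ∈ L₀.domain := L₀.domain.sub_mem (hXdom m) (hXdom n)
      have hbd : z.im * ‖X m - X n‖ ≤ ‖L₀ ⟨X m - X n, hsub⟩ - z • (X m - X n)‖ :=
        symm_lower_bound L₀ hsymm z (⟨X m - X n, hsub⟩ : L₀.domain)
      have heval : L₀ ⟨X m - X n, hsub⟩ = L₀ ⟨X m, hXdom m⟩ - L₀ ⟨X n, hXdom n⟩ := by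
        have h5 : (⟨X m - X n, hsub⟩ : L₀.domain) =
            (⟨X m, hXdom m⟩ : L₀.domain) - ⟨X n, hXdom n⟩ := by
          apply Subtype.ext; rfl
        rw [h5, L₀.map_sub]
      have hkey : L₀ ⟨X m - X n, hsub⟩ - z • (X m - X n) = yseq m - yseq n := by
        rw [heval, ← hXeq m, ← hXeq n]
        rw [smul_sub]; abel
      rw [hkey] at hbd
      have hlt : z.im * ‖X m - X n‖ < z.im * ε := by
        calc z.im * ‖X m - X n‖ ≤ ‖yseq m - yseq n‖ := hbd
          _ = dist (yseq m) (yseq n) := (dist_eq_norm _ _).symm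
          _ < z.im * ε := hN m hm n hn
      rw [dist_eq_norm]
      exact lt_of_mul_lt_mul_left hlt hz.le
    obtain ⟨x, hxlim⟩ := cauchySeq_tendsto_of_complete hXCauchy
    have hxG : x ∈ G := hGclosed.mem_of_tendsto hxlim (Filter.Eventually.of_forall hXG)
    have hLlim : Filter.Tendsto (fun n => L₀ ⟨X n, hXdom n⟩) Filter.atTop
        (nhds (y + z • x)) := by
      have : ∀ n, L₀ ⟨X n, hXdom n⟩ = yseq n + z • X n := by
        intro n; rw [← hXeq n]; abel
      simp_rw [this]
      exact hy.add (hxlim.const_smul z)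
    have hgraph : (x, y + z • x) ∈ L₀.graph := by
      apply hclosed.mem_of_tendsto (hxlim.prodMk_nhds hLlim)
      filter_upwards with n
      exact L₀.mem_graph ⟨X n, hXdom n⟩
    rw [LinearPMap.mem_graph_iff] at hgraph
    obtain ⟨ξ, hξ1, hξ2⟩ := hgraph
    have hξ1' : (ξ : H) = x := hξ1
    have hξ2' : L₀ ξ = y + z • x := hξ2
    have hxdom : x ∈ L₀.domain := by rw [← hξ1']; exact ξ.2
    refine ⟨x, hxdom, hxG, ?_⟩
    have heq : L₀ ⟨x, hxdom⟩ = L₀ ξ := by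
      congr 1
      exact Subtype.ext hξ1'.symm
    rw [heq, hξ2']
    abel
  -- Sol z ⊆ G
  have hSolG : ∀ z : ℂ, Sol z ⊆ (G : Set H) := by
    rintro z w ⟨x, hx, hxG, rfl⟩
    exact G.sub_mem (hGinv x hx hxG) (G.smul_mem z hxG)
  -- base point: Sol I ⊇ G
  have hbase : (G : Set H) ⊆ Sol Complex.I := by
    intro y hy
    have h1 : (G : Set H) ⊆ closure (Sol Complex.I) := by
      apply Subset.trans hGnplus
      apply closure_mono
      rintro w ⟨x, hx, hxG, rfl⟩
      exact ⟨x, hx, hxG, rfl⟩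
    have := h1 hy
    rwa [(hSolclosed Complex.I (by simp)).closure_eq] at this
  -- perturbation step
  have hstep : ∀ z₀ : ℂ, 0 < z₀.im → (G : Set H) ⊆ Sol z₀ →
      ∀ z : ℂ, dist z z₀ < z₀.im → (G : Set H) ⊆ Sol z := by
    intro z₀ hz₀ hsurj₀ z hdist y hy
    haveI : CompleteSpace ↥G := hGclosed.completeSpace_coe
    haveI : Nonempty ↥G := ⟨0⟩
    have hsol : ∀ w : ↥G, ∃ (x : H) (hx : x ∈ L₀.domain), x ∈ G ∧
        L₀ ⟨x, hx⟩ - z₀ • x = (w : H) := fun w => hsurj₀ w.2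
    choose X hXdom hXG hXeq using hsol
    -- Lipschitz bound for X
    have hXlip : ∀ w w' : ↥G, z₀.im * ‖X w - X w'‖ ≤ dist w w' := by
      intro w w'
      have hsub : X w - X w' ∈ L₀.domain := L₀.domain.sub_mem (hXdom w) (hXdom w')
      have hbd : z₀.im * ‖X w - X w'‖ ≤ ‖L₀ ⟨X w - X w', hsub⟩ - z₀ • (X w - X w')‖ :=
        symm_lower_bound L₀ hsymm z₀ (⟨X w - X w', hsub⟩ : L₀.domain)
      have heval : L₀ ⟨X w - X w', hsub⟩ = L₀ ⟨X w, hXdom w⟩ - L₀ ⟨X w', hXdom w'⟩ := by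
        have h5 : (⟨X w - X w', hsub⟩ : L₀.domain) =
            (⟨X w, hXdom w⟩ : L₀.domain) - ⟨X w', hXdom w'⟩ := by
          apply Subtype.ext; rfl
        rw [h5, L₀.map_sub]
      have hkey : L₀ ⟨X w - X w', hsub⟩ - z₀ • (X w - X w') = (w : H) - (w' : H) := by
        rw [heval, ← hXeq w, ← hXeq w']
        rw [smul_sub]; abel
      rw [hkey] at hbd
      calc z₀.im * ‖X w - X w'‖ ≤ ‖(w : H) - (w' : H)‖ := hbd
        _ = dist w w' := by rw [Subtype.dist_eq, dist_eq_norm]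
    -- the contraction
    set φ : ↥G → ↥G := fun w => ⟨y + (z - z₀) • X w,
      G.add_mem hy (G.smul_mem _ (hXG w))⟩ with hφ
    set K : NNReal := ⟨dist z z₀ / z₀.im, by positivity⟩ with hK
    have hφlip : LipschitzWith K φ := by
      apply LipschitzWith.of_dist_le_mul
      intro w w'
      have h1 : dist (φ w) (φ w') = ‖(z - z₀) • (X w - X w')‖ := by
        rw [Subtype.dist_eq, dist_eq_norm]
        simp only [hφ]
        congr 1
        rw [smul_sub]; abel
      rw [h1, norm_smul]
      have h2 : ‖X w - X w'‖ ≤ dist w w' / z₀.im := by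
        rw [le_div_iff₀ hz₀]
        linarith [hXlip w w']
      calc ‖z - z₀‖ * ‖X w - X w'‖ ≤ ‖z - z₀‖ * (dist w w' / z₀.im) :=
            mul_le_mul_of_nonneg_left h2 (norm_nonneg _)
        _ = (K : ℝ) * dist w w' := by
            rw [hK]
            change ‖z - z₀‖ * (dist w w' / z₀.im) = dist z z₀ / z₀.im * dist w w'
            rw [Complex.dist_eq]
            ring
    have hcontr : ContractingWith K φ := by
      constructor
      · rw [← NNReal.coe_lt_one, hK]; change dist z z₀ / z₀.im < 1
        rw [div_lt_one hz₀]
        exact hdist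
      · exact hφlip
    obtain ⟨w, hwfix, -, -⟩ := hcontr.exists_fixedPoint ⟨y, hy⟩ (edist_ne_top _ _)
    refine ⟨X w, hXdom w, hXG w, ?_⟩
    have hwcoe : (w : H) = y + (z - z₀) • X w := by
      conv_lhs => rw [← hwfix]
    have : L₀ ⟨X w, hXdom w⟩ - z • X w =
        (L₀ ⟨X w, hXdom w⟩ - z₀ • X w) - (z - z₀) • X w := by
      rw [sub_smul]; abel
    rw [this, hXeq w, hwcoe]
    abel
  -- propagate over the upper half plane
  have hmain : ∀ z : ℂ, 0 < z.im → (G : Set H) ⊆ Sol z := by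
    have := upper_half_reach (S := {z : ℂ | (G : Set H) ⊆ Sol z}) hbase ?_
    · exact fun z hz => this z hz
    · intro z₀ hz₀S hz₀im z hdist
      exact hstep z₀ hz₀im hz₀S z hdist
  intro z hz y hy
  obtain ⟨x, hx, hxG, heq⟩ := hmain z hz hy
  refine ⟨x, hx, hxG, heq, ?_⟩
  have hb2 : z.im * ‖x‖ ≤ ‖L₀ ⟨x, hx⟩ - z • x‖ :=
    symm_lower_bound L₀ hsymm z (⟨x, hx⟩ : L₀.domain)
  rw [heq] at hb2
  exact hb2

end Resolvent

section MainProof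

variable {H : Type*} [NormedAddCommGroup H] [InnerProductSpace ℂ H] [CompleteSpace H]

set_option maxHeartbeats 1000000 in
lemma green_orthogonality
    (L₀ : H →ₗ.[ℂ] H)
    (hclosed : L₀.IsClosed) (hdense : Dense (L₀.domain : Set H))
    (hsymm : L₀.IsFormalAdjoint L₀)
    {B : Type*} [NormedAddCommGroup B] [InnerProductSpace ℂ B]
    (Γ₁ Γ₂ : H →ₗ[ℂ] B)
    (hGreen : ∀ u v : L₀.adjoint.domain,
      (inner ℂ (v : H) (L₀.adjoint u) : ℂ) - inner ℂ (L₀.adjoint v : H) (u : H) =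
        (inner ℂ (Γ₂ (v : H)) (Γ₁ (u : H)) : ℂ) - inner ℂ (Γ₁ (v : H)) (Γ₂ (u : H)))
    (hB : ∀ x : H, x ∈ L₀.domain ↔
      ∃ hx : x ∈ L₀.adjoint.domain, Γ₁ x = 0 ∧ Γ₂ x = 0)
    (G : Submodule ℂ H) (hGclosed : IsClosed (G : Set H))
    (hGinv : ∀ x (hx : x ∈ L₀.domain), x ∈ G → L₀ ⟨x, hx⟩ ∈ G)
    (hGnplus : (G : Set H) ⊆ closure
      {z : H | ∃ (x : H) (hx : x ∈ L₀.domain), x ∈ G ∧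
        z = L₀ ⟨x, hx⟩ - Complex.I • x})
    (g : H) (hg : g ∈ G)
    (T : ℝ) (hT : 0 < T) (u : ℝ → H)
    (hcont : ContinuousOn u (Set.Icc 0 T))
    (hudom : ∀ t ∈ Set.Icc (0:ℝ) T, u t ∈ L₀.adjoint.domain)
    (hderiv : ∀ (t : ℝ) (ht : t ∈ Set.Icc (0:ℝ) T),
      HasDerivWithinAt u (Complex.I • L₀.adjoint ⟨u t, hudom t ht⟩) (Set.Icc 0 T) t)
    (hu0 : u 0 = 0) :
    ∀ t ∈ Set.Icc (0:ℝ) T, (inner ℂ g (u t) : ℂ) = 0 := by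
  classical
  -- L₀ is contained in its adjoint
  have hle : L₀ ≤ L₀.adjoint := LinearPMap.IsFormalAdjoint.le_adjoint hdense hsymm
  -- reduced Green identity against elements of `Dom L₀`
  have key : ∀ (uu : L₀.adjoint.domain) (x : H) (hx : x ∈ L₀.domain),
      (inner ℂ x (L₀.adjoint uu) : ℂ) = inner ℂ (L₀ ⟨x, hx⟩ : H) (uu : H) := by
    intro uu x hx
    obtain ⟨hxad, hΓ1, hΓ2⟩ := (hB x).1 hx
    have hgreen := hGreen uu ⟨x, hxad⟩
    have hagree : (L₀.adjoint ⟨x, hxad⟩ : H) = L₀ ⟨x, hx⟩ :=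
      (hle.2 (x := ⟨x, hx⟩) (y := ⟨x, hxad⟩) rfl).symm
    rw [hagree] at hgreen
    have hcoe : ((⟨x, hxad⟩ : L₀.adjoint.domain) : H) = x := rfl
    rw [hcoe, hΓ1, hΓ2] at hgreen
    simp only [inner_zero_left, sub_zero] at hgreen
    exact sub_eq_zero.1 hgreen
  -- the scalar function v
  set v : ℝ → ℂ := fun t => inner ℂ g (u t) with hvdef
  have hvcont : ContinuousOn v (Set.Icc 0 T) :=
    (innerSL ℂ g).continuous.comp_continuousOn hcont
  obtain ⟨Mu, hMu⟩ : ∃ M, ∀ s ∈ Set.Icc (0:ℝ) T, ‖u s‖ ≤ M :=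
    IsCompact.exists_bound_of_continuousOn isCompact_Icc hcont
  have hMu0 : 0 ≤ Mu := le_trans (norm_nonneg _) (hMu 0 ⟨le_rfl, hT.le⟩)
  have hres := resolvent_exists L₀ hclosed hsymm G hGclosed hGinv hGnplus
  -- the Laplace-transform bound
  have hb : ∀ t ∈ Set.Ioc (0:ℝ) T, ∀ c : ℂ, 0 < c.re →
      ‖∫ s in (0:ℝ)..t, Complex.exp (-(c * s)) * v s‖ ≤
        (‖g‖ * Mu) * Real.exp (-(c.re * t)) / c.re := by
    rintro t ⟨ht0, htT⟩ c hc
    set z : ℂ := Complex.I * (starRingEnd ℂ) c with hzdef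
    have hzim : z.im = c.re := by
      simp [hzdef, Complex.mul_im]
    obtain ⟨xz, hxzdom, hxzG, hxzeq, hxzbd⟩ := hres z (by rw [hzim]; exact hc) g hg
    rw [hzim] at hxzbd
    set w : ℝ → ℂ := fun s => inner ℂ xz (u s) with hwdef
    have hwcont : ContinuousOn w (Set.Icc 0 T) :=
      (innerSL ℂ xz).continuous.comp_continuousOn hcont
    -- derivative of w
    have hw : ∀ s ∈ Set.Icc (0:ℝ) T,
        HasDerivWithinAt w (Complex.I * v s + c * w s) (Set.Icc 0 T) s := by
      intro s hs
      have hd := HasDerivWithinAt.inner ℂ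
        (hasDerivWithinAt_const s (Set.Icc (0:ℝ) T) xz) (hderiv s hs)
      have hsimp : (inner ℂ xz (Complex.I • (L₀.adjoint ⟨u s, hudom s hs⟩ : H)) : ℂ) +
          inner ℂ (0 : H) (u s) = Complex.I * v s + c * w s := by
        rw [inner_zero_left, add_zero, inner_smul_right]
        have h1 : (inner ℂ xz (L₀.adjoint ⟨u s, hudom s hs⟩ : H) : ℂ) =
            inner ℂ (L₀ ⟨xz, hxzdom⟩ : H) (u s) := key ⟨u s, hudom s hs⟩ xz hxzdom
        have h2 : (L₀ ⟨xz, hxzdom⟩ : H) = g + z • xz := by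
          rw [← hxzeq]; abel
        rw [h1, h2, inner_add_left, inner_smul_left]
        have hconj : (starRingEnd ℂ) z = -Complex.I * c := by
          rw [hzdef]
          simp [map_mul, Complex.conj_I]
        rw [hconj]
        simp only [hvdef, hwdef]
        ring_nf
        rw [Complex.I_sq]
        ring
      rw [← hsimp]
      exact hd
    -- derivative of F := exp(-cs) * w s
    set F : ℝ → ℂ := fun s => Complex.exp (-(c * s)) * w s with hFdef
    have hF : ∀ s ∈ Set.Icc (0:ℝ) T,
        HasDerivWithinAt F (Complex.exp (-(c * s)) * (Complex.I * v s))
          (Set.Icc 0 T) s := by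
      intro s hs
      have hlin : HasDerivAt (fun r : ℝ => -(c * r)) (-c) s := by
        exact ((Complex.ofRealCLM.hasDerivAt (x := s)).const_mul c).neg.congr_deriv (by simp)
      have hexp : HasDerivAt (fun r : ℝ => Complex.exp (-(c * r)))
          (Complex.exp (-(c * s)) * (-c)) s := hlin.cexp
      have hmul := (hexp.hasDerivWithinAt).mul (hw s hs)
      have : Complex.exp (-(c * s)) * (-c) * w s +
          Complex.exp (-(c * s)) * (Complex.I * v s + c * w s) =
          Complex.exp (-(c * s)) * (Complex.I * v s) := by ring
      rw [this] at hmul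
      exact hmul
    -- FTC on [0, t]
    have hFTC : ∫ s in (0:ℝ)..t, Complex.exp (-(c * s)) * (Complex.I * v s) = F t - F 0 := by
      apply intervalIntegral.integral_eq_sub_of_hasDeriv_right_of_le ht0.le
      · apply ContinuousOn.mul _ (hwcont.mono (Set.Icc_subset_Icc le_rfl htT))
        apply Continuous.continuousOn; fun_prop
      · intro s hs
        have hsIcc : s ∈ Set.Icc (0:ℝ) T := ⟨hs.1.le, hs.2.le.trans htT⟩
        apply (hF s hsIcc).mono_of_mem_nhdsWithin
        apply Icc_mem_nhdsGT_of_mem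
        exact ⟨hs.1.le, lt_of_lt_of_le hs.2 htT⟩
      · apply ContinuousOn.intervalIntegrable
        have hsub : Set.uIcc (0:ℝ) t ⊆ Set.Icc 0 T := by
          rw [Set.uIcc_of_le ht0.le]
          exact Set.Icc_subset_Icc le_rfl htT
        apply ContinuousOn.mul _ ((hvcont.mono hsub).const_smul Complex.I)
        apply Continuous.continuousOn; fun_prop
    have hF0 : F 0 = 0 := by
      simp only [hFdef, hwdef, hu0, inner_zero_right, mul_zero]
    -- pull the constant I out
    have hpull : ∫ s in (0:ℝ)..t, Complex.exp (-(c * s)) * (Complex.I * v s) =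
        Complex.I * ∫ s in (0:ℝ)..t, Complex.exp (-(c * s)) * v s := by
      rw [← intervalIntegral.integral_const_mul]
      apply intervalIntegral.integral_congr
      intro s _
      ring
    have hnorm : ‖∫ s in (0:ℝ)..t, Complex.exp (-(c * s)) * v s‖ = ‖F t‖ := by
      have h1 : Complex.I * ∫ s in (0:ℝ)..t, Complex.exp (-(c * s)) * v s = F t := by
        rw [← hpull, hFTC, hF0, sub_zero]
      calc ‖∫ s in (0:ℝ)..t, Complex.exp (-(c * s)) * v s‖
          = ‖Complex.I‖ * ‖∫ s in (0:ℝ)..t, Complex.exp (-(c * s)) * v s‖ := by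
            simp [Complex.norm_I]
        _ = ‖Complex.I * ∫ s in (0:ℝ)..t, Complex.exp (-(c * s)) * v s‖ := by
            rw [norm_mul]
        _ = ‖F t‖ := by rw [h1]
    rw [hnorm]
    -- estimate ‖F t‖
    have hexpnorm : ‖Complex.exp (-(c * t))‖ = Real.exp (-(c.re * t)) := by
      rw [Complex.norm_exp]
      congr 1
      simp [Complex.mul_re]
    have hwle : ‖w t‖ ≤ (‖g‖ / c.re) * Mu := by
      have h1 : ‖w t‖ ≤ ‖xz‖ * ‖u t‖ := norm_inner_le_norm xz (u t)
      have h2 : ‖xz‖ ≤ ‖g‖ / c.re := by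
        rw [le_div_iff₀ hc]
        linarith
      calc ‖w t‖ ≤ ‖xz‖ * ‖u t‖ := h1
        _ ≤ (‖g‖ / c.re) * Mu :=
            mul_le_mul h2 (hMu t ⟨ht0.le, htT⟩) (norm_nonneg _) (by positivity)
    calc ‖F t‖ = Real.exp (-(c.re * t)) * ‖w t‖ := by
          rw [hFdef]; simp only []
          rw [norm_mul, hexpnorm]
      _ ≤ Real.exp (-(c.re * t)) * ((‖g‖ / c.re) * Mu) :=
          mul_le_mul_of_nonneg_left hwle (Real.exp_pos _).le
      _ = (‖g‖ * Mu) * Real.exp (-(c.re * t)) / c.re := by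
          field_simp
  -- apply the Laplace uniqueness lemma
  exact laplace_decay_zero hT hvcont hb

end MainProof

lemma not_dense_of_orthogonal {H : Type*} [NormedAddCommGroup H] [InnerProductSpace ℂ H]
    {G : Submodule ℂ H} (hGne : G ≠ ⊥) (S : Set H)
    (hS : ∀ g ∈ G, ∀ x ∈ S, (inner ℂ g x : ℂ) = 0) :
    ¬ Dense ((Submodule.span ℂ S : Submodule ℂ H) : Set H) := by
  intro hdense2
  have hspan : Submodule.span ℂ S ≤ Gᗮ := by
    apply Submodule.span_le.2
    intro x hx
    rw [SetLike.mem_coe, Submodule.mem_orthogonal]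
    intro g hg
    exact hS g hg x hx
  have horth : (Gᗮ : Set H) = Set.univ := by
    apply Set.eq_univ_of_univ_subset
    calc Set.univ = closure ((Submodule.span ℂ S : Submodule ℂ H) : Set H) :=
          hdense2.closure_eq.symm
      _ ⊆ closure (Gᗮ : Set H) := closure_mono hspan
      _ = (Gᗮ : Set H) := (Submodule.isClosed_orthogonal G).closure_eq
  have hGbot : G = ⊥ := by
    rw [← le_bot_iff]
    intro g hg
    have h1 : g ∈ Gᗮᗮ := Submodule.le_orthogonal_orthogonal G hg
    have h2 : Gᗮ = ⊤ := by
      apply Submodule.eq_top_iff'.2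
      intro x
      have : x ∈ (Gᗮ : Set H) := by rw [horth]; trivial
      exact this
    rw [h2, Submodule.top_orthogonal_eq_bot] at h1
    exact h1
  exact hGne hGbot


/- STATEMENT 12 (Main theorem, necessity): If a Green system `{H, B; L₀, Γ₁, Γ₂}`
satisfying conditions A, B, C is such that `L₀` has a part `L₀|_G` in a nonzero
closed invariant subspace `G` with `n₊[L₀|_G] = 0`, then `G` is orthogonal to the
total reachable set `U` of the boundary control system `i u_t + L₀* u = 0`,
`u 0 = 0`, `Γ₁ u = f` (controls `f = Γ₁(φ⁺ + φ⁻)` from the smooth class `M`);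
in particular the system is not controllable.

The condition `n₊[L₀|_G] = 0` is expressed through the equivalent
characterization `Ran (L₀|_G − i·1)` dense in `G` (for a closed symmetric
operator `A` one has `Ker (A* + i·1) = (Ran (A − i·1))^⊥`). -/
theorem stmt12
    {H : Type*} [NormedAddCommGroup H] [InnerProductSpace ℂ H] [CompleteSpace H]
    [TopologicalSpace.SeparableSpace H]
    {B : Type*} [NormedAddCommGroup B] [InnerProductSpace ℂ B] [CompleteSpace B]
    [TopologicalSpace.SeparableSpace B]
    (L₀ : H →ₗ.[ℂ] H)
    (hclosed : L₀.IsClosed) (hdense : Dense (L₀.domain : Set H))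
    (hsymm : L₀.IsFormalAdjoint L₀)
    (Γ₁ Γ₂ : H →ₗ[ℂ] B)
    -- condition A: `Ran Γ₁` dense in `B`:
    (hA : Dense (Set.range fun x : L₀.adjoint.domain => Γ₁ (x : H)))
    -- the Green formula (paper's `(a,b)` is Mathlib's `⟪b, a⟫`):
    (hGreen : ∀ u v : L₀.adjoint.domain,
      (inner ℂ (v : H) (L₀.adjoint u) : ℂ) - inner ℂ (L₀.adjoint v : H) (u : H) =
        (inner ℂ (Γ₂ (v : H)) (Γ₁ (u : H)) : ℂ) - inner ℂ (Γ₁ (v : H)) (Γ₂ (u : H)))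
    -- condition B:
    (hB : ∀ x : H, x ∈ L₀.domain ↔
      ∃ hx : x ∈ L₀.adjoint.domain, Γ₁ x = 0 ∧ Γ₂ x = 0)
    -- condition C: `L = L₀*|_{Ker Γ₁}` is self-adjoint:
    (L : H →ₗ.[ℂ] H) (hLle : L ≤ L₀.adjoint)
    (hLdom : ∀ x : H, x ∈ L.domain ↔ ∃ hx : x ∈ L₀.adjoint.domain, Γ₁ x = 0)
    (hLsa : IsSelfAdjoint L)
    -- the nonzero closed invariant subspace `G` with `n₊[L₀|_G] = 0`:
    (G : Submodule ℂ H) (hGne : G ≠ ⊥) (hGclosed : IsClosed (G : Set H))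
    (hGdense : closure ((G : Set H) ∩ L₀.domain) = (G : Set H))
    (hGinv : ∀ x (hx : x ∈ L₀.domain), x ∈ G → L₀ ⟨x, hx⟩ ∈ G)
    (hGnplus : (G : Set H) ⊆ closure
      {z : H | ∃ (x : H) (hx : x ∈ L₀.domain), x ∈ G ∧
        z = L₀ ⟨x, hx⟩ - Complex.I • x}) :
    -- `G ⟂ U` where `U` is spanned by states `u^f(T)`, `f ∈ M`, `T > 0`:
    (∀ g ∈ G, ∀ x ∈
      {x : H | ∃ T : ℝ, 0 < T ∧
        ∃ (u : ℝ → H) (φp φm : ℝ → H),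
          -- `φ^± ∈ C²([0,∞); N_{±i})`, supported in `(0,∞)`:
          ContDiff ℝ 2 φp ∧ ContDiff ℝ 2 φm ∧
          tsupport φp ⊆ Set.Ioi 0 ∧ tsupport φm ⊆ Set.Ioi 0 ∧
          (∃ hp : ∀ t, φp t ∈ L₀.adjoint.domain,
            ∀ t, L₀.adjoint ⟨φp t, hp t⟩ = Complex.I • φp t) ∧
          (∃ hm : ∀ t, φm t ∈ L₀.adjoint.domain,
            ∀ t, L₀.adjoint ⟨φm t, hm t⟩ = -(Complex.I • φm t)) ∧
          -- `u` is the classical solution with control `f = Γ₁(φ⁺ + φ⁻)`: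
          ContinuousOn u (Set.Icc 0 T) ∧
          (∃ hudom : ∀ t ∈ Set.Icc (0:ℝ) T, u t ∈ L₀.adjoint.domain,
            ∀ (t : ℝ) (ht : t ∈ Set.Icc (0:ℝ) T),
              HasDerivWithinAt u (Complex.I • L₀.adjoint ⟨u t, hudom t ht⟩)
                (Set.Icc 0 T) t) ∧
          u 0 = 0 ∧
          (∀ t ∈ Set.Icc (0:ℝ) T, Γ₁ (u t) = Γ₁ (φp t + φm t)) ∧
          u T = x},
      (inner ℂ g x : ℂ) = 0) ∧
    -- in particular, the system is not controllable:
    ¬ Dense ((Submodule.span ℂ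
      {x : H | ∃ T : ℝ, 0 < T ∧
        ∃ (u : ℝ → H) (φp φm : ℝ → H),
          ContDiff ℝ 2 φp ∧ ContDiff ℝ 2 φm ∧
          tsupport φp ⊆ Set.Ioi 0 ∧ tsupport φm ⊆ Set.Ioi 0 ∧
          (∃ hp : ∀ t, φp t ∈ L₀.adjoint.domain,
            ∀ t, L₀.adjoint ⟨φp t, hp t⟩ = Complex.I • φp t) ∧
          (∃ hm : ∀ t, φm t ∈ L₀.adjoint.domain,
            ∀ t, L₀.adjoint ⟨φm t, hm t⟩ = -(Complex.I • φm t)) ∧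
          ContinuousOn u (Set.Icc 0 T) ∧
          (∃ hudom : ∀ t ∈ Set.Icc (0:ℝ) T, u t ∈ L₀.adjoint.domain,
            ∀ (t : ℝ) (ht : t ∈ Set.Icc (0:ℝ) T),
              HasDerivWithinAt u (Complex.I • L₀.adjoint ⟨u t, hudom t ht⟩)
                (Set.Icc 0 T) t) ∧
          u 0 = 0 ∧
          (∀ t ∈ Set.Icc (0:ℝ) T, Γ₁ (u t) = Γ₁ (φp t + φm t)) ∧
          u T = x} : Submodule ℂ H) : Set H) := by
  have main : ∀ g ∈ G, ∀ x ∈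
      {x : H | ∃ T : ℝ, 0 < T ∧
        ∃ (u : ℝ → H) (φp φm : ℝ → H),
          ContDiff ℝ 2 φp ∧ ContDiff ℝ 2 φm ∧
          tsupport φp ⊆ Set.Ioi 0 ∧ tsupport φm ⊆ Set.Ioi 0 ∧
          (∃ hp : ∀ t, φp t ∈ L₀.adjoint.domain,
            ∀ t, L₀.adjoint ⟨φp t, hp t⟩ = Complex.I • φp t) ∧
          (∃ hm : ∀ t, φm t ∈ L₀.adjoint.domain,
            ∀ t, L₀.adjoint ⟨φm t, hm t⟩ = -(Complex.I • φm t)) ∧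
          ContinuousOn u (Set.Icc 0 T) ∧
          (∃ hudom : ∀ t ∈ Set.Icc (0:ℝ) T, u t ∈ L₀.adjoint.domain,
            ∀ (t : ℝ) (ht : t ∈ Set.Icc (0:ℝ) T),
              HasDerivWithinAt u (Complex.I • L₀.adjoint ⟨u t, hudom t ht⟩)
                (Set.Icc 0 T) t) ∧
          u 0 = 0 ∧
          (∀ t ∈ Set.Icc (0:ℝ) T, Γ₁ (u t) = Γ₁ (φp t + φm t)) ∧
          u T = x},
      (inner ℂ g x : ℂ) = 0 := by
    rintro g hg x ⟨T, hT, u, φp, φm, -, -, -, -, -, -, hcont, ⟨hudom, hderiv⟩, hu0, -, huT⟩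
    have := green_orthogonality L₀ hclosed hdense hsymm Γ₁ Γ₂ hGreen hB G hGclosed
      hGinv hGnplus g hg T hT u hcont hudom hderiv hu0 T ⟨hT.le, le_rfl⟩
    rwa [huT] at this
  exact ⟨main, not_dense_of_orthogonal hGne _ main⟩
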